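/- arXiv:2504.02964 — 6 statements merged into one kernel-verified Lean document; each statement's English description precedes it below -/
import Mathlib

section
/- Soundness of the STREL robust semantics: for every STREL formula ψ, every multi-agent trajectory x, every time τ0 ∈ ℕ, and every agent label l ∈ {1,...,L}, if ρ^ψ(x,τ0,l) > 0 then (x,τ0,l) ⊨ ψ, and if ρ^ψ(x,τ0,l) < 0 then (x,τ0,l) ⊨ ¬ψ (i.e., (x,τ0,l) ⊭ ψ). -/
open scoped ENNReal

/-! Spatio-temporal reach and escape logic (STREL) for multi-agent systems with
`L` agents, each with state in `ℝ^n`. -/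

/-- A multi-agent trajectory: at each time `τ`, each agent `l ∈ {1,...,L}` has a
state `x τ l ∈ ℝ^n`. -/
abbrev MTraj (L n : ℕ) := ℕ → Fin L → Fin n → ℝ

/-- A weight function assigning to each pair of agent labels, each time, and the
trajectory a weight in `[0,∞]`; two agents are disconnected iff the weight is `∞`. -/
abbrev AgentWeight (L n : ℕ) := Fin L → Fin L → ℕ → MTraj L n → ℝ≥0∞

/-- STREL formulas over agent state space `Fin n → ℝ`.  Predicates are given by
their (Borel-measurable) predicate functions `h : (Fin n → ℝ) → ℝ`; `untl I` is
the until operator with time interval `I ⊆ ℕ`; `reach d₁ d₂` and `escape d₁ d₂`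
are the spatial reach and escape operators with distance interval `[d₁,d₂] ⊆ [0,∞]`. -/
inductive STREL (n : ℕ) : Type where
  | tt : STREL n
  | atom (h : (Fin n → ℝ) → ℝ) : STREL n
  | neg (ψ : STREL n) : STREL n
  | conj (ψ₁ ψ₂ : STREL n) : STREL n
  | untl (I : Set ℕ) (ψ₁ ψ₂ : STREL n) : STREL n
  | reach (d₁ d₂ : ℝ≥0∞) (ψ₁ ψ₂ : STREL n) : STREL n
  | escape (d₁ d₂ : ℝ≥0∞) (ψ : STREL n) : STREL n

namespace STREL

variable {L n : ℕ}

/-- `r : ℕ → Fin L` is a route at time `τ` if consecutive agents are connected. -/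
def IsRoute (W : AgentWeight L n) (x : MTraj L n) (τ : ℕ) (r : ℕ → Fin L) : Prop :=
  ∀ i : ℕ, W (r i) (r (i + 1)) τ x ≠ ⊤

/-- `r ∈ Routes(τ, l)`: a route at time `τ` starting at agent `l`. -/
def RouteFrom (W : AgentWeight L n) (x : MTraj L n) (τ : ℕ) (l : Fin L)
    (r : ℕ → Fin L) : Prop :=
  r 0 = l ∧ IsRoute W x τ r

/-- Accumulated weight `d(i, r, τ)` along the route `r` up to index `i ∈ ℕ`. -/
noncomputable def dAcc (W : AgentWeight L n) (x : MTraj L n) (τ : ℕ)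
    (r : ℕ → Fin L) (i : ℕ) : ℝ≥0∞ :=
  ∑ j ∈ Finset.range i, W (r j) (r (j + 1)) τ x

/-- `r(l')`: the index of the first occurrence of `l'` in the route `r`
(`∞` if `l'` does not occur in `r`). -/
noncomputable def firstHit (r : ℕ → Fin L) (l' : Fin L) : ℕ∞ :=
  sInf {i : ℕ∞ | ∃ k : ℕ, i = (k : ℕ∞) ∧ r k = l'}

/-- Accumulated weight `d(i, r, τ)` for an extended index `i ∈ ℕ∞`
(with `d(∞, r, τ) = ∞`). -/
noncomputable def dAccE (W : AgentWeight L n) (x : MTraj L n) (τ : ℕ)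
    (r : ℕ → Fin L) : ℕ∞ → ℝ≥0∞ :=
  WithTop.recTopCoe ⊤ fun k => dAcc W x τ r k

/-- `d̃(l', r, τ) = d(r(l'), r, τ)`: distance to agent `l'` along the route `r`. -/
noncomputable def dTilde (W : AgentWeight L n) (x : MTraj L n) (τ : ℕ)
    (r : ℕ → Fin L) (l' : Fin L) : ℝ≥0∞ :=
  dAccE W x τ r (firstHit r l')

/-- `d̃_min(l, l', τ)`: the minimum distance from `l` to `l'` over all routes
starting at `l`. -/
noncomputable def dMin (W : AgentWeight L n) (x : MTraj L n) (τ : ℕ)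
    (l l' : Fin L) : ℝ≥0∞ :=
  ⨅ (r : ℕ → Fin L) (_ : RouteFrom W x τ l r), dTilde W x τ r l'

/-- Boolean semantics `(x, τ, l) ⊨ ψ`. -/
def sat (W : AgentWeight L n) : STREL n → MTraj L n → ℕ → Fin L → Prop
  | tt, _, _, _ => True
  | atom h, x, τ, l => 0 ≤ h (x τ l)
  | neg ψ, x, τ, l => ¬ sat W ψ x τ l
  | conj ψ₁ ψ₂, x, τ, l => sat W ψ₁ x τ l ∧ sat W ψ₂ x τ l
  | untl I ψ₁ ψ₂, x, τ, l =>
      ∃ i ∈ I, sat W ψ₂ x (τ + i) l ∧ ∀ τ' ∈ Set.Ioo τ (τ + i), sat W ψ₁ x τ' l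
  | reach d₁ d₂ ψ₁ ψ₂, x, τ, l =>
      ∃ r, RouteFrom W x τ l r ∧ ∃ i : ℕ, dAcc W x τ r i ∈ Set.Icc d₁ d₂ ∧
        sat W ψ₂ x τ (r i) ∧ ∀ j < i, sat W ψ₁ x τ (r j)
  | escape d₁ d₂ ψ, x, τ, l =>
      ∃ r, RouteFrom W x τ l r ∧ ∃ l' : Fin L, (∃ k : ℕ, r k = l') ∧
        dMin W x τ l l' ∈ Set.Icc d₁ d₂ ∧
        ∀ i : ℕ, (i : ℕ∞) ≤ firstHit r l' → sat W ψ x τ (r i)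

/-- Quantitative (robust) semantics `ρ^ψ(x, τ, l) ∈ ℝ ∪ {±∞}`. -/
noncomputable def robust (W : AgentWeight L n) :
    STREL n → MTraj L n → ℕ → Fin L → EReal
  | tt, _, _, _ => ⊤
  | atom h, x, τ, l => ((h (x τ l) : ℝ) : EReal)
  | neg ψ, x, τ, l => - robust W ψ x τ l
  | conj ψ₁ ψ₂, x, τ, l => min (robust W ψ₁ x τ l) (robust W ψ₂ x τ l)
  | untl I ψ₁ ψ₂, x, τ, l =>
      ⨆ (i : ℕ) (_ : i ∈ I),
        min (robust W ψ₂ x (τ + i) l)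
          (⨅ (τ' : ℕ) (_ : τ' ∈ Set.Ioo τ (τ + i)), robust W ψ₁ x τ' l)
  | reach d₁ d₂ ψ₁ ψ₂, x, τ, l =>
      ⨆ (r : ℕ → Fin L) (_ : RouteFrom W x τ l r) (i : ℕ)
          (_ : dAcc W x τ r i ∈ Set.Icc d₁ d₂),
        min (robust W ψ₂ x τ (r i))
          (⨅ (j : ℕ) (_ : j < i), robust W ψ₁ x τ (r j))
  | escape d₁ d₂ ψ, x, τ, l =>
      ⨆ (r : ℕ → Fin L) (_ : RouteFrom W x τ l r) (l' : Fin L)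
          (_ : (∃ k : ℕ, r k = l') ∧ dMin W x τ l l' ∈ Set.Icc d₁ d₂),
        ⨅ (i : ℕ) (_ : (i : ℕ∞) ≤ firstHit r l'), robust W ψ x τ (r i)

/-- A STREL formula is (temporally) bounded if all until time intervals are bounded. -/
def Bounded : STREL n → Prop
  | tt => True
  | atom _ => True
  | neg ψ => Bounded ψ
  | conj ψ₁ ψ₂ => Bounded ψ₁ ∧ Bounded ψ₂
  | untl I ψ₁ ψ₂ => BddAbove I ∧ Bounded ψ₁ ∧ Bounded ψ₂
  | reach _ _ ψ₁ ψ₂ => Bounded ψ₁ ∧ Bounded ψ₂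
  | escape _ _ ψ => Bounded ψ

/-- The formula length `L^ψ` (the spatial operators have length `0`). -/
noncomputable def len : STREL n → ℕ
  | tt => 0
  | atom _ => 0
  | neg ψ => len ψ
  | conj ψ₁ ψ₂ => max (len ψ₁) (len ψ₂)
  | untl I ψ₁ ψ₂ => sSup I + max (len ψ₁) (len ψ₂)
  | reach _ _ _ _ => 0
  | escape _ _ _ => 0

/-- The set of predicate functions occurring in a formula. -/
def preds : STREL n → Set ((Fin n → ℝ) → ℝ)
  | tt => ∅
  | atom h => {h}
  | neg ψ => preds ψ
  | conj ψ₁ ψ₂ => preds ψ₁ ∪ preds ψ₂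
  | untl _ ψ₁ ψ₂ => preds ψ₁ ∪ preds ψ₂
  | reach _ _ ψ₁ ψ₂ => preds ψ₁ ∪ preds ψ₂
  | escape _ _ ψ => preds ψ

/-- Positive normal form: no negations. -/
def PNF : STREL n → Prop
  | tt => True
  | atom _ => True
  | neg _ => False
  | conj ψ₁ ψ₂ => PNF ψ₁ ∧ PNF ψ₂
  | untl _ ψ₁ ψ₂ => PNF ψ₁ ∧ PNF ψ₂
  | reach _ _ ψ₁ ψ₂ => PNF ψ₁ ∧ PNF ψ₂
  | escape _ _ ψ => PNF ψ

end STREL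

/-- **Soundness of the STREL robust semantics**: for every STREL formula `ψ`, every
multi-agent trajectory `x`, every time `τ0 ∈ ℕ`, and every agent label
`l ∈ {1,...,L}`, if `ρ^ψ(x,τ0,l) > 0` then `(x,τ0,l) ⊨ ψ`, and if
`ρ^ψ(x,τ0,l) < 0` then `(x,τ0,l) ⊨ ¬ψ` (i.e. `(x,τ0,l) ⊭ ψ`).  The weight function
is symmetric and non-reflexive (each agent is disconnected from itself). -/
theorem strel_robust_soundness {L n : ℕ} (W : AgentWeight L n)
    (hsym : ∀ l₁ l₂ τ x, W l₁ l₂ τ x = W l₂ l₁ τ x)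
    (hirrefl : ∀ l τ x, W l l τ x = ⊤)
    (ψ : STREL n) (x : MTraj L n) (τ0 : ℕ) (l : Fin L) :
    (0 < STREL.robust W ψ x τ0 l → STREL.sat W ψ x τ0 l) ∧
    (STREL.robust W ψ x τ0 l < 0 → ¬ STREL.sat W ψ x τ0 l) := by

  induction ψ generalizing τ0 l with
  | tt =>
    refine ⟨fun _ => trivial, fun h _ => ?_⟩
    simp [STREL.robust] at h
  | atom h =>
    constructor
    · intro hp
      simp only [STREL.robust] at hp
      simp only [STREL.sat]
      exact_mod_cast le_of_lt (EReal.coe_pos.mp hp)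
    · intro hn hs
      simp only [STREL.robust] at hn
      simp only [STREL.sat] at hs
      exact absurd hs (not_le.mpr (EReal.coe_neg'.mp hn))
  | neg ψ ih =>
    obtain ⟨ih1, ih2⟩ := ih τ0 l
    constructor
    · intro hp
      simp only [STREL.robust] at hp
      simp only [STREL.sat]
      rw [← neg_zero] at hp
      exact ih2 (EReal.neg_lt_neg_iff.mp hp)
    · intro hn hs
      simp only [STREL.robust] at hn
      simp only [STREL.sat] at hs
      rw [← neg_zero] at hn
      exact hs (ih1 (EReal.neg_lt_neg_iff.mp hn))
  | conj ψ₁ ψ₂ ih₁ ih₂ =>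
    constructor
    · intro hp
      simp only [STREL.robust, lt_min_iff] at hp
      exact ⟨(ih₁ τ0 l).1 hp.1, (ih₂ τ0 l).1 hp.2⟩
    · intro hn hs
      simp only [STREL.robust, min_lt_iff] at hn
      rcases hn with hn | hn
      · exact (ih₁ τ0 l).2 hn hs.1
      · exact (ih₂ τ0 l).2 hn hs.2
  | untl I ψ₁ ψ₂ ih₁ ih₂ =>
    constructor
    · intro hp
      simp only [STREL.robust] at hp
      rw [lt_iSup_iff] at hp
      obtain ⟨i, hp⟩ := hp
      rw [lt_iSup_iff] at hp
      obtain ⟨hi, hp⟩ := hp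
      rw [lt_min_iff] at hp
      refine ⟨i, hi, (ih₂ (τ0 + i) l).1 hp.1, fun τ' hτ' => ?_⟩
      have := hp.2.trans_le (iInf₂_le_of_le τ' hτ' le_rfl)
      exact (ih₁ τ' l).1 this
    · intro hn hs
      simp only [STREL.robust] at hn
      obtain ⟨i, hi, h2, h1⟩ := hs
      have hle : min (STREL.robust W ψ₂ x (τ0 + i) l)
          (⨅ (τ' : ℕ) (_ : τ' ∈ Set.Ioo τ0 (τ0 + i)), STREL.robust W ψ₁ x τ' l) < 0 :=
        lt_of_le_of_lt (le_iSup₂_of_le i hi le_rfl) hn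
      rw [min_lt_iff] at hle
      rcases hle with hle | hle
      · exact (ih₂ (τ0 + i) l).2 hle h2
      · rw [iInf_lt_iff] at hle
        obtain ⟨τ', hle⟩ := hle
        rw [iInf_lt_iff] at hle
        obtain ⟨hτ', hle⟩ := hle
        exact (ih₁ τ' l).2 hle (h1 τ' hτ')
  | reach d₁ d₂ ψ₁ ψ₂ ih₁ ih₂ =>
    constructor
    · intro hp
      simp only [STREL.robust] at hp
      rw [lt_iSup_iff] at hp
      obtain ⟨r, hp⟩ := hp
      rw [lt_iSup_iff] at hp
      obtain ⟨hr, hp⟩ := hp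
      rw [lt_iSup_iff] at hp
      obtain ⟨i, hp⟩ := hp
      rw [lt_iSup_iff] at hp
      obtain ⟨hd, hp⟩ := hp
      rw [lt_min_iff] at hp
      refine ⟨r, hr, i, hd, (ih₂ τ0 (r i)).1 hp.1, fun j hj => ?_⟩
      exact (ih₁ τ0 (r j)).1 (hp.2.trans_le (iInf₂_le_of_le j hj le_rfl))
    · intro hn hs
      simp only [STREL.robust] at hn
      obtain ⟨r, hr, i, hd, h2, h1⟩ := hs
      have hle : min (STREL.robust W ψ₂ x τ0 (r i))
          (⨅ (j : ℕ) (_ : j < i), STREL.robust W ψ₁ x τ0 (r j)) < 0 := by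
        refine lt_of_le_of_lt ?_ hn
        refine le_iSup₂_of_le r hr ?_
        exact le_iSup₂_of_le i hd le_rfl
      rw [min_lt_iff] at hle
      rcases hle with hle | hle
      · exact (ih₂ τ0 (r i)).2 hle h2
      · rw [iInf_lt_iff] at hle
        obtain ⟨j, hle⟩ := hle
        rw [iInf_lt_iff] at hle
        obtain ⟨hj, hle⟩ := hle
        exact (ih₁ τ0 (r j)).2 hle (h1 j hj)
  | escape d₁ d₂ ψ ih =>
    constructor
    · intro hp
      simp only [STREL.robust] at hp
      rw [lt_iSup_iff] at hp
      obtain ⟨r, hp⟩ := hp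
      rw [lt_iSup_iff] at hp
      obtain ⟨hr, hp⟩ := hp
      rw [lt_iSup_iff] at hp
      obtain ⟨l', hp⟩ := hp
      rw [lt_iSup_iff] at hp
      obtain ⟨⟨hk, hdm⟩, hp⟩ := hp
      refine ⟨r, hr, l', hk, hdm, fun i hi => ?_⟩
      exact (ih τ0 (r i)).1 (hp.trans_le (iInf₂_le_of_le i hi le_rfl))
    · intro hn hs
      simp only [STREL.robust] at hn
      obtain ⟨r, hr, l', hk, hdm, hall⟩ := hs
      have hle : (⨅ (i : ℕ) (_ : (i : ℕ∞) ≤ STREL.firstHit r l'), STREL.robust W ψ x τ0 (r i)) < 0 := by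
        refine lt_of_le_of_lt ?_ hn
        refine le_iSup₂_of_le r hr ?_
        exact le_iSup₂_of_le l' ⟨hk, hdm⟩ le_rfl
      rw [iInf_lt_iff] at hle
      obtain ⟨i, hle⟩ := hle
      rw [iInf_lt_iff] at hle
      obtain ⟨hi, hle⟩ := hle
      exact (ih τ0 (r i)).2 hle (hall i hi)
end

section
/- Vanilla conformal prediction coverage guarantee: let R^(0), R^(1), ..., R^(K) be i.i.d. real-valued random variables, let δ ∈ (0,1), and let C := Quantile_{(1+1/K)(1−δ)}(R^(1),...,R^(K)). Then Prob(R^(0) ≤ C) ≥ 1 − δ, where the probability is over the joint law of R^(0),...,R^(K). -/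
/-!
Put `m := ⌈(1 - δ)(K + 1)⌉` and call the number of sample points strictly below `x_j` the
rank of `j`. In every sample `x₀, …, x_K` at least `m` indices have rank `< m` (a minimal index
of rank `≥ m` would only see indices of rank `< m` below it). An i.i.d. sample is exchangeable,
so these `K + 1` events all have the probability of the one for `j = 0`, which is therefore at
least `m / (K + 1) ≥ 1 - δ`. On that event `x₀ ≤ C`: the level is chosen so that every `z` in
the set defining `C` has at least `(1 + 1/K)(1 - δ) K`, hence at least `m`, calibration scores
`≤ z`, and these cannot all lie strictly below `x₀`.
-/

open MeasureTheory ProbabilityTheory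

/-- Empirical quantile of the scores `r^(1),...,r^(K)` at level `β`:
`Quantile_β(r) := inf {z | β ≤ #{i : r i ≤ z} / K}` (computed in the extended
reals, so that the quantile is `+∞` exactly when the defining set is empty). -/
noncomputable def quantile {K : ℕ} (β : ℝ) (r : Fin K → EReal) : EReal :=
  sInf {z : EReal | β ≤ (Nat.card {i : Fin K // r i ≤ z} : ℝ) / K}

/-- The f-divergence `D_f(P,Q) := ∫ f (dP/dQ) dQ`. -/
noncomputable def fDiv {α : Type*} [MeasurableSpace α] (f : ℝ → ℝ)
    (P Q : Measure α) : ℝ :=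
  ∫ a, f ((P.rnDeriv Q a).toReal) ∂Q

/-- The function `g(β) := inf {z ∈ [0,1] | β f(z/β) + (1-β) f((1-z)/(1-β)) ≤ ε}`
from robust conformal prediction. -/
noncomputable def gfun (f : ℝ → ℝ) (ε β : ℝ) : ℝ :=
  sInf {z : ℝ | z ∈ Set.Icc 0 1 ∧ β * f (z / β) + (1 - β) * f ((1 - z) / (1 - β)) ≤ ε}

/-- The generalized inverse `g⁻¹(τ) := sup {β ∈ [0,1] | g(β) ≤ τ}`. -/
noncomputable def gInv (f : ℝ → ℝ) (ε τ : ℝ) : ℝ :=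
  sSup {β : ℝ | β ∈ Set.Icc 0 1 ∧ gfun f ε β ≤ τ}

/-- `δ_n := 1 - g((1 + 1/K) g⁻¹(1 - δ))`. -/
noncomputable def deltaN (f : ℝ → ℝ) (ε δ : ℝ) (K : ℕ) : ℝ :=
  1 - gfun f ε ((1 + 1 / K) * gInv f ε (1 - δ))

/-- `δ̃ := 1 - g⁻¹(1 - δ_n)`. -/
noncomputable def deltaTilde (f : ℝ → ℝ) (ε δ : ℝ) (K : ℕ) : ℝ :=
  1 - gInv f ε (1 - deltaN f ε δ K)

open Finset
open scoped ENNReal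

section StrictRank

variable {ι α : Type*} [Fintype ι] [LinearOrder α]

def strictRank (x : ι → α) (j : ι) : ℕ :=
  #{i | x i < x j}

lemma strictRank_comp_perm (x : ι → α) (σ : Equiv.Perm ι) (j : ι) :
    strictRank (x ∘ σ) j = strictRank x (σ j) := by
  unfold strictRank
  exact card_equiv σ (by simp)

lemma le_card_strictRank_lt (x : ι → α) {m : ℕ} (hm : m ≤ Fintype.card ι) :
    m ≤ #{j | strictRank x j < m} := by
  classical
  set B : Finset ι := {j | strictRank x j < m}
  by_contra! hB
  have hcompl : Bᶜ.Nonempty := by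
    rw [nonempty_iff_ne_empty, Ne, compl_eq_empty_iff]
    intro hBuniv
    rw [hBuniv, card_univ] at hB
    omega
  -- every index strictly below a `≤`-minimal `j₀ ∉ B` lies in `B`, so `strictRank x j₀ < m`
  obtain ⟨j₀, hj₀, hmin⟩ := Bᶜ.exists_min_image x hcompl
  have hbelow : ({i | x i < x j₀} : Finset ι) ⊆ B := fun i hi => by
    by_contra hiB
    exact (mem_filter.1 hi).2.not_ge (hmin i (mem_compl.2 hiB))
  have : strictRank x j₀ < m := (card_le_card hbelow).trans_lt hB
  exact mem_compl.1 hj₀ (by simpa [B] using this)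

end StrictRank

lemma measure_pi_strictRank_mem_eq {ι α : Type*} [Fintype ι] [LinearOrder α]
    [MeasurableSpace α] (ν : Measure α) [SigmaFinite ν] (S : Set ℕ) (j j' : ι) :
    Measure.pi (fun _ : ι => ν) {x | strictRank x j ∈ S} =
      Measure.pi (fun _ : ι => ν) {x | strictRank x j' ∈ S} := by
  classical
  have hswap := measurePreserving_arrowCongr' (fun _ : ι => ν) (fun _ : ι => ν)
    (Equiv.swap j j').symm (MeasurableEquiv.refl α) fun _ => MeasurePreserving.id ν
  rw [← hswap.measure_preimage_equiv {x | strictRank x j' ∈ S}]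
  congr 1
  ext x
  change strictRank x j ∈ S ↔ strictRank (x ∘ Equiv.swap j j') j' ∈ S
  rw [strictRank_comp_perm, Equiv.swap_apply_right]

lemma MeasureTheory.natCast_mul_measure_univ_le_sum {Ω ι : Type*} [MeasurableSpace Ω]
    [Fintype ι] (μ : Measure Ω) {A : ι → Set Ω} [∀ j, DecidablePred (· ∈ A j)]
    (hA : ∀ j, MeasurableSet (A j)) {m : ℕ} (h : ∀ ω, m ≤ #{j | ω ∈ A j}) :
    m * μ Set.univ ≤ ∑ j, μ (A j) := by
  calc (m : ℝ≥0∞) * μ Set.univ = ∫⁻ _, (m : ℝ≥0∞) ∂μ := by simp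
  _ ≤ ∫⁻ ω, ∑ j, (A j).indicator 1 ω ∂μ := lintegral_mono fun ω => by
        simp only [Set.indicator_apply, Pi.one_apply, sum_boole]
        exact_mod_cast h ω
  _ = ∑ j, μ (A j) := by
        rw [lintegral_finsetSum _ fun j _ => measurable_one.indicator (hA j)]
        simp only [lintegral_indicator_one (hA _)]

section Measurability

variable {ι α : Type*} [Fintype ι] [LinearOrder α] [TopologicalSpace α]
  [OrderClosedTopology α] [SecondCountableTopology α] [MeasurableSpace α]
  [OpensMeasurableSpace α]

lemma measurable_strictRank (j : ι) : Measurable fun x : ι → α => strictRank x j := by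
  simp only [strictRank, card_filter]
  exact Finset.measurable_sum _ fun i _ =>
    Measurable.ite (measurableSet_lt (measurable_pi_apply i) (measurable_pi_apply j))
      measurable_const measurable_const

lemma natCast_le_card_mul_measure_pi_strictRank_lt (ν : Measure α) [IsProbabilityMeasure ν]
    (j : ι) {m : ℕ} (hm : m ≤ Fintype.card ι) :
    (m : ℝ≥0∞) ≤
      Fintype.card ι * Measure.pi (fun _ : ι => ν) {x | strictRank x j < m} := by
  calc (m : ℝ≥0∞) = m * Measure.pi (fun _ : ι => ν) Set.univ := by simp
  _ ≤ ∑ j', Measure.pi (fun _ : ι => ν) {x | strictRank x j' < m} :=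
      natCast_mul_measure_univ_le_sum _ (A := fun j' => {x | strictRank x j' < m})
        (fun j' => measurable_strictRank j' measurableSet_Iio)
        fun x => le_card_strictRank_lt x hm
  _ = Fintype.card ι * Measure.pi (fun _ : ι => ν) {x | strictRank x j < m} :=
      (sum_eq_card_nsmul fun j' _ => measure_pi_strictRank_mem_eq ν (Set.Iio m) j' j).trans
        (by simp)

end Measurability

lemma coe_le_quantile_of_strictRank_lt {K : ℕ} {β : ℝ} (x : Fin (K + 1) → ℝ)
    (h : strictRank x 0 < ⌈β * K⌉₊) :
    (x 0 : EReal) ≤ quantile β fun i : Fin K => (x i.succ : EReal) := by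
  refine le_sInf fun z hz => ?_
  rw [Set.mem_ofPred_eq, Nat.card_eq_fintype_card, Fintype.card_subtype] at hz
  have hcount : ⌈β * K⌉₊ ≤ #{i : Fin K | (x i.succ : EReal) ≤ z} :=
    Nat.ceil_le.2 (mul_le_of_le_div₀ (Nat.cast_nonneg _) (Nat.cast_nonneg _) hz)
  obtain ⟨i, hiz, hi⟩ : ∃ i : Fin K, (x i.succ : EReal) ≤ z ∧ x 0 ≤ x i.succ := by
    by_contra! hlt
    have : #{i : Fin K | (x i.succ : EReal) ≤ z} ≤ strictRank x 0 :=
      card_le_card_of_injOn Fin.succ (fun i hi => by simpa using hlt i (mem_filter.1 hi).2)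
        (Fin.succ_injective _).injOn
    omega
  exact (EReal.coe_le_coe_iff.2 hi).trans hiz

theorem vanilla_conformal_prediction_general
    {Ω : Type*} [MeasurableSpace Ω] (μ : Measure Ω)
    {K : ℕ} (hK : 0 < K)
    (R : Fin (K + 1) → Ω → ℝ) (hmeas : ∀ i, Measurable (R i))
    (hindep : iIndepFun R μ)
    (ν : Measure ℝ) [IsProbabilityMeasure ν]
    (hiid : ∀ i : Fin (K + 1), Measure.map (R i) μ = ν)
    (δ : ℝ) (hδ : δ ∈ Set.Ioo (0 : ℝ) 1) :
    ENNReal.ofReal (1 - δ) ≤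
      μ {ω | (R 0 ω : EReal) ≤
        quantile ((1 + 1 / K) * (1 - δ)) fun i : Fin K => ((R i.succ ω : ℝ) : EReal)} := by
  have hβK : (1 + 1 / (K : ℝ)) * (1 - δ) * K = (1 - δ) * (K + 1) := by field_simp
  set m := ⌈(1 + 1 / (K : ℝ)) * (1 - δ) * K⌉₊
  have hmK : m ≤ Fintype.card (Fin (K + 1)) := by
    rw [Fintype.card_fin, Nat.ceil_le, hβK]
    push_cast
    nlinarith [hδ.1]
  have hmδ : ((K + 1 : ℕ) : ℝ≥0∞) * ENNReal.ofReal (1 - δ) ≤ m := by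
    rw [← ENNReal.ofReal_natCast, ← ENNReal.ofReal_mul (by positivity),
      ← ENNReal.ofReal_natCast]
    refine ENNReal.ofReal_le_ofReal ?_
    push_cast
    linarith [Nat.le_ceil ((1 + 1 / (K : ℝ)) * (1 - δ) * K)]
  have hrank := natCast_le_card_mul_measure_pi_strictRank_lt ν 0 hmK
  rw [Fintype.card_fin] at hrank
  have hlaw : μ.map (fun ω i => R i ω) = Measure.pi fun _ : Fin (K + 1) => ν := by
    simp only [hindep.map_fun_eq_pi_map fun i => (hmeas i).aemeasurable, hiid]
  have hE : MeasurableSet {x : Fin (K + 1) → ℝ | strictRank x 0 < m} :=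
    measurable_strictRank 0 measurableSet_Iio
  calc ENNReal.ofReal (1 - δ)
      ≤ Measure.pi (fun _ : Fin (K + 1) => ν) {x | strictRank x 0 < m} :=
        (ENNReal.mul_le_mul_iff_right (by simp) (by simp)).1 (hmδ.trans hrank)
    _ = μ ((fun ω i => R i ω) ⁻¹' {x | strictRank x 0 < m}) := by
        rw [← hlaw, Measure.map_apply (measurable_pi_lambda _ hmeas) hE]
    _ ≤ _ := measure_mono fun ω hω => coe_le_quantile_of_strictRank_lt (fun i => R i ω) hω

/-- **Vanilla conformal prediction coverage guarantee**: let `R^(0),...,R^(K)` be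
i.i.d. real-valued random variables, `δ ∈ (0,1)`, and
`C := Quantile_{(1+1/K)(1-δ)}(R^(1),...,R^(K))`.  Then `Prob(R^(0) ≤ C) ≥ 1 - δ`. -/
theorem vanilla_conformal_prediction
    {Ω : Type*} [MeasurableSpace Ω] (μ : Measure Ω) [IsProbabilityMeasure μ]
    {K : ℕ} (hK : 0 < K)
    (R : Fin (K + 1) → Ω → ℝ) (hmeas : ∀ i, Measurable (R i))
    (hindep : iIndepFun R μ)
    (ν : Measure ℝ) [IsProbabilityMeasure ν]
    (hiid : ∀ i : Fin (K + 1), Measure.map (R i) μ = ν)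
    (δ : ℝ) (hδ : δ ∈ Set.Ioo (0 : ℝ) 1) :
    ENNReal.ofReal (1 - δ) ≤
      μ {ω | (R 0 ω : EReal) ≤
        quantile ((1 + 1 / K) * (1 - δ)) fun i : Fin K => ((R i.succ ω : ℝ) : EReal)} :=
  vanilla_conformal_prediction_general μ hK R hmeas hindep ν hiid δ hδ
end

section
/- Closed form of the robust-conformal function g for the total variation distance: let ε > 0 and let f(z) := (1/2)|z − 1|. Then for every β ∈ (0,1), g(β) := inf{z ∈ [0,1] : β·f(z/β) + (1−β)·f((1−z)/(1−β)) ≤ ε} = max(0, β − ε). -/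
open MeasureTheory ProbabilityTheory

/-! Both perspective terms equal `|z - β| / 2`, so the constraint defining `g(β)` reads
`|z - β| ≤ ε`: the feasible set is `[0,1] ∩ [β - ε, β + ε]`, a nonempty interval whose
infimum is its left endpoint `max 0 (β - ε)`. -/

lemma mul_abs_div_sub_one {t : ℝ} (ht : 0 < t) (x : ℝ) : t * |x / t - 1| = |x - t| :=
  calc t * |x / t - 1| = |t * (x / t - 1)| := by rw [abs_mul, abs_of_pos ht]
    _ = |x - t| := by rw [mul_sub, mul_div_cancel₀ x ht.ne', mul_one]

lemma totalVariation_perspective_sum {β : ℝ} (hβ : β ∈ Set.Ioo (0 : ℝ) 1) (z : ℝ) :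
    β * (1 / 2 * |z / β - 1|) + (1 - β) * (1 / 2 * |(1 - z) / (1 - β) - 1|) = |z - β| := by
  have h₁ := mul_abs_div_sub_one hβ.1 z
  have h₂ : (1 - β) * |(1 - z) / (1 - β) - 1| = |z - β| := by
    rw [mul_abs_div_sub_one (sub_pos.2 hβ.2), sub_sub_sub_cancel_left, abs_sub_comm]
  linear_combination (1 / 2 : ℝ) * h₁ + (1 / 2 : ℝ) * h₂

/-- **Closed form of the robust-conformal function `g` for the total variation
distance**: for `ε > 0` and `f(z) = (1/2)|z-1|`, for every `β ∈ (0,1)`,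
`g(β) = max(0, β - ε)`. -/
theorem gfun_totalVariation_closed_form (ε : ℝ) (hε : 0 < ε)
    (β : ℝ) (hβ : β ∈ Set.Ioo (0 : ℝ) 1) :
    gfun (fun z => (1 / 2) * |z - 1|) ε β = max 0 (β - ε) := by
  have feasible_set :
      {z : ℝ | z ∈ Set.Icc 0 1 ∧
        β * (1 / 2 * |z / β - 1|) + (1 - β) * (1 / 2 * |(1 - z) / (1 - β) - 1|) ≤ ε}
        = Set.Icc 0 1 ∩ Set.Icc (β - ε) (β + ε) := by
    ext z
    rw [Set.mem_ofPred_eq, Set.mem_inter_iff, totalVariation_perspective_sum hβ, abs_sub_comm,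
      Set.mem_Icc_iff_abs_le]
  have nonempty : max 0 (β - ε) ≤ min 1 (β + ε) :=
    max_le (le_min zero_le_one (by linarith [hβ.1])) (le_min (by linarith [hβ.2]) (by linarith))
  rw [gfun, feasible_set, Set.Icc_inter_Icc, csInf_Icc nonempty]
end

section
/- Monotonicity of the STL robust semantics for formulas in positive normal form: let φ be a bounded STL formula in positive normal form (containing no negations) imposed at time τ0 with formula length L^φ, let t ≥ τ0, and let x, x' be two trajectories with the same prefix x_τ = x'_τ for all τ ≤ t. If ρ^π(x,τ) ≥ ρ^π(x',τ) for every predicate π occurring in φ and every time τ ∈ {t+1,...,τ0+L^φ}, then ρ^φ(x,τ0) ≥ ρ^φ(x',τ0). -/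
/-! Signal temporal logic (STL) over state space `ℝ^N`, with discrete-time
trajectories `ℕ → (Fin N → ℝ)`. -/

/-- STL formulas over state space `Fin N → ℝ`.  Predicates are given by their
(Borel-measurable) predicate functions `h : (Fin N → ℝ) → ℝ`; `untl I` is the
until operator with time interval `I ⊆ ℕ` (the shift `τ ⊕ I` is `{τ + i | i ∈ I}`). -/
inductive STL (N : ℕ) : Type where
  | tt : STL N
  | atom (h : (Fin N → ℝ) → ℝ) : STL N
  | neg (φ : STL N) : STL N
  | conj (φ₁ φ₂ : STL N) : STL N
  | untl (I : Set ℕ) (φ₁ φ₂ : STL N) : STL N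

namespace STL

variable {N : ℕ}

/-- Boolean semantics `(x, τ) ⊨ φ`. -/
def sat : STL N → (ℕ → Fin N → ℝ) → ℕ → Prop
  | tt, _, _ => True
  | atom h, x, τ => 0 ≤ h (x τ)
  | neg φ, x, τ => ¬ sat φ x τ
  | conj φ₁ φ₂, x, τ => sat φ₁ x τ ∧ sat φ₂ x τ
  | untl I φ₁ φ₂, x, τ =>
      ∃ i ∈ I, sat φ₂ x (τ + i) ∧ ∀ τ' ∈ Set.Ioo τ (τ + i), sat φ₁ x τ'

/-- Quantitative (robust) semantics `ρ^φ(x, τ) ∈ ℝ ∪ {±∞}`. -/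
noncomputable def robust : STL N → (ℕ → Fin N → ℝ) → ℕ → EReal
  | tt, _, _ => ⊤
  | atom h, x, τ => ((h (x τ) : ℝ) : EReal)
  | neg φ, x, τ => - robust φ x τ
  | conj φ₁ φ₂, x, τ => min (robust φ₁ x τ) (robust φ₂ x τ)
  | untl I φ₁ φ₂, x, τ =>
      ⨆ (i : ℕ) (_ : i ∈ I),
        min (robust φ₂ x (τ + i))
          (⨅ (τ' : ℕ) (_ : τ' ∈ Set.Ioo τ (τ + i)), robust φ₁ x τ')

/-- A formula is bounded if all until time intervals are bounded. -/
def Bounded : STL N → Prop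
  | tt => True
  | atom _ => True
  | neg φ => Bounded φ
  | conj φ₁ φ₂ => Bounded φ₁ ∧ Bounded φ₂
  | untl I φ₁ φ₂ => BddAbove I ∧ Bounded φ₁ ∧ Bounded φ₂

/-- The formula length `L^φ`. -/
noncomputable def len : STL N → ℕ
  | tt => 0
  | atom _ => 0
  | neg φ => len φ
  | conj φ₁ φ₂ => max (len φ₁) (len φ₂)
  | untl I φ₁ φ₂ => sSup I + max (len φ₁) (len φ₂)

/-- The set of predicate functions occurring in a formula. -/
def preds : STL N → Set ((Fin N → ℝ) → ℝ)
  | tt => ∅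
  | atom h => {h}
  | neg φ => preds φ
  | conj φ₁ φ₂ => preds φ₁ ∪ preds φ₂
  | untl _ φ₁ φ₂ => preds φ₁ ∪ preds φ₂

/-- Positive normal form: no negations. -/
def PNF : STL N → Prop
  | tt => True
  | atom _ => True
  | neg _ => False
  | conj φ₁ φ₂ => PNF φ₁ ∧ PNF φ₂
  | untl _ φ₁ φ₂ => PNF φ₁ ∧ PNF φ₂

end STL

theorem stl_robust_monotone_aux {N : ℕ} (φ : STL N) (hφ : φ.Bounded) (hpnf : φ.PNF)
    (t : ℕ) (x x' : ℕ → Fin N → ℝ) (hpre : ∀ τ, τ ≤ t → x τ = x' τ) :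
    ∀ τ0, (∀ h ∈ φ.preds, ∀ τ, t + 1 ≤ τ → τ ≤ τ0 + φ.len →
      STL.robust (STL.atom h) x' τ ≤ STL.robust (STL.atom h) x τ) →
    STL.robust φ x' τ0 ≤ STL.robust φ x τ0 := by
  induction φ with
  | tt => intro τ0 _; simp [STL.robust]
  | atom h =>
    intro τ0 hm
    by_cases hτ : τ0 ≤ t
    · rw [STL.robust, STL.robust, hpre τ0 hτ]
    · exact hm h rfl τ0 (by omega) (by simp [STL.len])
  | neg φ ih => exact absurd hpnf id
  | conj φ₁ φ₂ ih₁ ih₂ =>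
    intro τ0 hm
    refine min_le_min (ih₁ hφ.1 hpnf.1 τ0 ?_) (ih₂ hφ.2 hpnf.2 τ0 ?_) <;>
      intro h hh τ h1 h2
    · exact hm h (Or.inl hh) τ h1 (by
        have : φ₁.len ≤ (STL.conj φ₁ φ₂).len := le_max_left _ _
        omega)
    · exact hm h (Or.inr hh) τ h1 (by
        have : φ₂.len ≤ (STL.conj φ₁ φ₂).len := le_max_right _ _
        omega)
  | untl I φ₁ φ₂ ih₁ ih₂ =>
    intro τ0 hm
    rw [STL.robust, STL.robust]
    refine iSup_mono fun i => iSup_mono fun hi => ?_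
    have hiS : i ≤ sSup I := le_csSup hφ.1 hi
    have hlen : (STL.untl I φ₁ φ₂).len = sSup I + max φ₁.len φ₂.len := rfl
    refine min_le_min (ih₂ hφ.2.2 hpnf.2 (τ0 + i) ?_) ?_
    · intro h hh τ h1 h2
      refine hm h (Or.inr hh) τ h1 ?_
      have : φ₂.len ≤ max φ₁.len φ₂.len := le_max_right _ _
      omega
    · refine iInf_mono fun τ' => iInf_mono fun hτ' => ?_
      refine ih₁ hφ.2.1 hpnf.1 τ' ?_
      intro h hh τ h1 h2
      refine hm h (Or.inl hh) τ h1 ?_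
      have : φ₁.len ≤ max φ₁.len φ₂.len := le_max_left _ _
      have := hτ'.2
      omega

/-- **Monotonicity of the STL robust semantics for formulas in positive normal form**:
let `φ` be a bounded STL formula in positive normal form imposed at time `τ0` with
formula length `L^φ`, let `t ≥ τ0`, and let `x, x'` be trajectories with the same
prefix up to time `t`.  If `ρ^π(x,τ) ≥ ρ^π(x',τ)` for every predicate `π` occurring
in `φ` and every time `τ ∈ {t+1,...,τ0+L^φ}`, then `ρ^φ(x,τ0) ≥ ρ^φ(x',τ0)`. -/
theorem stl_robust_monotone {N : ℕ} (φ : STL N) (hφ : φ.Bounded) (hpnf : φ.PNF)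
    (τ0 t : ℕ) (ht : τ0 ≤ t)
    (x x' : ℕ → Fin N → ℝ) (hpre : ∀ τ, τ ≤ t → x τ = x' τ)
    (hmono : ∀ h ∈ φ.preds, ∀ τ, t + 1 ≤ τ → τ ≤ τ0 + φ.len →
      STL.robust (STL.atom h) x' τ ≤ STL.robust (STL.atom h) x τ) :
    STL.robust φ x' τ0 ≤ STL.robust φ x τ0 := by
  exact stl_robust_monotone_aux φ hφ hpnf t x x' hpre τ0 hmono
end

section
/- Interpretable robust STL predictive runtime verification (Theorem on the indirect method): let φ be a bounded STL formula in positive normal form imposed at time τ0 with formula length L^φ, let t be the current time with H := τ0 + L^φ − t, let X be a random trajectory, let 𝒫 := {(π,τ) : π a predicate of φ, τ ∈ {t+1,...,t+H}}, and let δ ∈ (0,1). Suppose the constants ρ*_{π,τ} satisfy Prob(ρ^π(X,τ) ≥ ρ*_{π,τ} for all (π,τ) ∈ 𝒫) ≥ 1 − δ. Define the probabilistic robust semantics ρ̄^φ(X̂,τ0) recursively by ρ̄^π(X̂,τ) := h(X_τ) for τ ≤ t and ρ̄^π(X̂,τ) := ρ*_{π,τ} for τ > t, with ρ̄^True := ∞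 and the conjunction and until operators evaluated exactly as in the robust semantics. Then Prob(ρ^φ(X,τ0) ≥ ρ̄^φ(X̂,τ0)) ≥ 1 − δ. -/
open MeasureTheory

/-- The probabilistic robust semantics `ρ̄^φ`: at predicates it uses the observed
state `h(X_τ)` for `τ ≤ t` and the probabilistic lower bound `ρ*_{π,τ}` for
`τ > t`; all Boolean and temporal operators are evaluated exactly as in the robust
semantics. -/
noncomputable def STL.probRobust {N : ℕ}
    (ρstar : ((Fin N → ℝ) → ℝ) → ℕ → EReal) (t : ℕ) :
    STL N → (ℕ → Fin N → ℝ) → ℕ → EReal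
  | .tt, _, _ => ⊤
  | .atom h, x, τ => if τ ≤ t then ((h (x τ) : ℝ) : EReal) else ρstar h τ
  | .neg φ, x, τ => - STL.probRobust ρstar t φ x τ
  | .conj φ₁ φ₂, x, τ =>
      min (STL.probRobust ρstar t φ₁ x τ) (STL.probRobust ρstar t φ₂ x τ)
  | .untl I φ₁ φ₂, x, τ =>
      ⨆ (i : ℕ) (_ : i ∈ I),
        min (STL.probRobust ρstar t φ₂ x (τ + i))
          (⨅ (τ' : ℕ) (_ : τ' ∈ Set.Ioo τ (τ + i)), STL.probRobust ρstar t φ₁ x τ')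

theorem probRobust_le_robust {N : ℕ} (ρstar : ((Fin N → ℝ) → ℝ) → ℕ → ℝ)
    (t M : ℕ) (x : ℕ → Fin N → ℝ) :
    ∀ φ : STL N, φ.Bounded → φ.PNF →
      (∀ h ∈ φ.preds, ∀ τ, t + 1 ≤ τ → τ ≤ M →
        ((ρstar h τ : ℝ) : EReal) ≤ ((h (x τ) : ℝ) : EReal)) →
      ∀ τ, τ + φ.len ≤ M →
      STL.probRobust (fun h τ => ((ρstar h τ : ℝ) : EReal)) t φ x τ
        ≤ STL.robust φ x τ := by
  intro φ
  induction φ with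
  | tt => intro _ _ _ τ _; simp [STL.probRobust, STL.robust]
  | atom h =>
    intro _ _ hx τ hτ
    simp only [STL.probRobust, STL.robust]
    split
    · exact le_refl _
    · rename_i hle
      exact hx h (by simp [STL.preds]) τ (by omega) (by simpa [STL.len] using hτ)
  | neg φ ih => intro _ hp; exact absurd hp (by simp [STL.PNF])
  | conj φ₁ φ₂ ih₁ ih₂ =>
    intro hb hp hx τ hτ
    simp only [STL.len] at hτ
    exact min_le_min
      (ih₁ hb.1 hp.1 (fun h hh => hx h (Or.inl hh)) τ (by omega))
      (ih₂ hb.2 hp.2 (fun h hh => hx h (Or.inr hh)) τ (by omega))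
  | untl I φ₁ φ₂ ih₁ ih₂ =>
    intro hb hp hx τ hτ
    simp only [STL.len] at hτ
    simp only [STL.probRobust, STL.robust]
    refine iSup_mono fun i => iSup_mono' fun hi => ⟨hi, ?_⟩
    have hiS : i ≤ sSup I := le_csSup hb.1 hi
    refine min_le_min
      (ih₂ hb.2.2 hp.2 (fun h hh => hx h (Or.inr hh)) (τ + i) (by omega)) ?_
    refine iInf_mono fun τ' => iInf_mono' fun hτ' => ⟨hτ', ?_⟩
    exact ih₁ hb.2.1 hp.1 (fun h hh => hx h (Or.inl hh)) τ'
      (by have := hτ'.2; omega)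

/-- **Interpretable robust STL predictive runtime verification** (indirect method):
let `φ` be a bounded STL formula in positive normal form imposed at `τ0`, `t` the
current time (so the prediction times are `{t+1,...,τ0+L^φ}`), `X` a random
trajectory, and suppose the constants `ρ*_{π,τ}` satisfy
`Prob(ρ^π(X,τ) ≥ ρ*_{π,τ} for all (π,τ) ∈ 𝒫) ≥ 1 - δ`.  Then the probabilistic
robust semantics `ρ̄^φ` satisfy `Prob(ρ^φ(X,τ0) ≥ ρ̄^φ(X̂,τ0)) ≥ 1 - δ`. -/
theorem interpretable_robust_stl_rprv
    {N : ℕ} {Ω : Type*} [MeasurableSpace Ω]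
    (μ : Measure Ω) [IsProbabilityMeasure μ]
    (φ : STL N) (hφ : φ.Bounded) (hpnf : φ.PNF)
    (τ0 t : ℕ) (ht : t ≤ τ0 + φ.len)
    (X : Ω → ℕ → Fin N → ℝ) (hX : Measurable X)
    (ρstar : ((Fin N → ℝ) → ℝ) → ℕ → ℝ)
    (δ : ℝ) (hδ : δ ∈ Set.Ioo (0 : ℝ) 1)
    (hcov : ENNReal.ofReal (1 - δ) ≤
      μ {ω | ∀ h ∈ φ.preds, ∀ τ, t + 1 ≤ τ → τ ≤ τ0 + φ.len →
              ((ρstar h τ : ℝ) : EReal) ≤ ((h (X ω τ) : ℝ) : EReal)}) :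
    ENNReal.ofReal (1 - δ) ≤
      μ {ω | STL.probRobust (fun h τ => ((ρstar h τ : ℝ) : EReal)) t φ (X ω) τ0
              ≤ STL.robust φ (X ω) τ0} := by
  refine le_trans hcov (μ.mono fun ω hω => ?_)
  exact probRobust_le_robust ρstar t (τ0 + φ.len) (X ω) φ hφ hpnf hω τ0 le_rfl
end

section
/- Soundness of the STL robust semantics: for every bounded STL formula φ, every trajectory x : ℕ → ℝ^N, and every time τ0 ∈ ℕ, if ρ^φ(x,τ0) > 0 then (x,τ0) ⊨ φ, and if ρ^φ(x,τ0) < 0 then (x,τ0) ⊭ φ. -/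
/-- **Soundness of the STL robust semantics**: for every bounded STL formula `φ`,
every trajectory `x : ℕ → ℝ^N`, and every time `τ0 ∈ ℕ`, if `ρ^φ(x,τ0) > 0` then
`(x,τ0) ⊨ φ`, and if `ρ^φ(x,τ0) < 0` then `(x,τ0) ⊭ φ`. -/
theorem stl_robust_soundness {N : ℕ} (φ : STL N) (hφ : φ.Bounded)
    (x : ℕ → Fin N → ℝ) (τ0 : ℕ) :
    (0 < STL.robust φ x τ0 → STL.sat φ x τ0) ∧
    (STL.robust φ x τ0 < 0 → ¬ STL.sat φ x τ0) := by
  clear hφ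
  induction φ generalizing τ0 with
  | tt => simp [STL.robust, STL.sat]
  | atom h =>
      constructor
      · intro hpos
        simp only [STL.robust] at hpos
        have : (0:ℝ) < h (x τ0) := by exact_mod_cast hpos
        exact le_of_lt this
      · intro hneg
        simp only [STL.robust] at hneg
        have : h (x τ0) < (0:ℝ) := by exact_mod_cast hneg
        simp [STL.sat]; linarith
  | neg φ ih =>
      simp only [STL.robust, STL.sat]
      constructor
      · intro hpos
        exact (ih τ0).2 (by simpa using EReal.lt_neg_comm.mp hpos)
      · intro hneg
        have : 0 < STL.robust φ x τ0 := by simpa using EReal.neg_lt_comm.mp hneg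
        exact fun hn => hn ((ih τ0).1 this)
  | conj φ₁ φ₂ ih₁ ih₂ =>
      simp only [STL.robust, STL.sat, lt_min_iff, min_lt_iff]
      constructor
      · rintro ⟨h1, h2⟩
        exact ⟨(ih₁ τ0).1 h1, (ih₂ τ0).1 h2⟩
      · rintro (h | h) ⟨s1, s2⟩
        · exact (ih₁ τ0).2 h s1
        · exact (ih₂ τ0).2 h s2
  | untl I φ₁ φ₂ ih₁ ih₂ =>
      simp only [STL.robust, STL.sat]
      constructor
      · intro hpos
        obtain ⟨i, hterm⟩ := lt_iSup_iff.mp hpos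
        obtain ⟨hiI, hterm⟩ := lt_iSup_iff.mp hterm
        rw [lt_min_iff] at hterm
        refine ⟨i, hiI, (ih₂ (τ0 + i)).1 hterm.1, fun τ' hτ' => ?_⟩
        refine (ih₁ τ').1 (lt_of_lt_of_le hterm.2 ?_)
        exact iInf_le_of_le τ' (iInf_le_of_le hτ' le_rfl)
      · rintro hneg ⟨i, hiI, hs2, hs1⟩
        have h2 : (0:EReal) ≤ STL.robust φ₂ x (τ0 + i) := by
          by_contra hc
          exact (ih₂ (τ0 + i)).2 (lt_of_not_ge hc) hs2
        have h1 : (0:EReal) ≤ ⨅ (τ' : ℕ) (_ : τ' ∈ Set.Ioo τ0 (τ0 + i)),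
            STL.robust φ₁ x τ' := by
          refine le_iInf fun τ' => le_iInf fun hτ' => ?_
          by_contra hc
          exact (ih₁ τ').2 (lt_of_not_ge hc) (hs1 τ' hτ')
        have hle : (0:EReal) ≤ min (STL.robust φ₂ x (τ0 + i))
            (⨅ (τ' : ℕ) (_ : τ' ∈ Set.Ioo τ0 (τ0 + i)), STL.robust φ₁ x τ') :=
          le_min h2 h1
        have : (0:EReal) ≤ ⨆ (j : ℕ) (_ : j ∈ I),
            min (STL.robust φ₂ x (τ0 + j))
              (⨅ (τ' : ℕ) (_ : τ' ∈ Set.Ioo τ0 (τ0 + j)), STL.robust φ₁ x τ') :=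
          le_trans hle (le_iSup_of_le i (le_iSup_of_le hiI le_rfl))
        exact absurd hneg (not_lt.mpr this)
end
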